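/- Let n ∈ ℕ, let p, q be real parameters with q > −1, and let δ, τ ∈ ℂ with Re(δ) > 0 and Re(δ) < 1 − Re(τ). Then for x > 0, the right-sided Riemann–Liouville fractional integral satisfies (I₋^{δ} t^{τ−1} M_n^{(p,q)}(1/t))(x) = (−1)^n Γ(1+q+n) Γ(1−δ−τ) / [Γ(1+q) Γ(1−τ)] · x^{τ+δ−1} · ₃F₂(1+n−p, −n, 1−δ−τ; 1+q, 1−τ; −1/x). -/

import Mathlib

open MeasureTheory

/-- Pochhammer symbol `(a)_n = a (a+1) ⋯ (a+n−1)`. -/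
noncomputable def poch (a : ℂ) (n : ℕ) : ℂ := ∏ i ∈ Finset.range n, (a + i)

/-- Generalized hypergeometric function `ₚF_q(a₁,…,a_p; c₁,…,c_q; x)`. -/
noncomputable def genHyp (as cs : List ℂ) (x : ℂ) : ℂ :=
  ∑' k : ℕ, ((as.map (fun a => poch a k)).prod / (cs.map (fun c => poch c k)).prod)
    * x ^ k / (Nat.factorial k)

/-- Appell's double hypergeometric function `F₃(a,a′,b,b′;c;x,y)`. -/
noncomputable def appellF3 (a a' b b' c x y : ℂ) : ℂ :=
  ∑' mn : ℕ × ℕ, poch a mn.1 * poch a' mn.2 * poch b mn.1 * poch b' mn.2 /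
    (poch c (mn.1 + mn.2) * (Nat.factorial mn.1) * (Nat.factorial mn.2)) * x ^ mn.1 * y ^ mn.2

/-- Generalized binomial coefficient `binom(a,k) = a(a−1)⋯(a−k+1)/k!`. -/
noncomputable def gbinom (a : ℂ) (k : ℕ) : ℂ := (∏ i ∈ Finset.range k, (a - i)) / (Nat.factorial k)

/-- Jacobi type orthogonal polynomial `M_n^{(p,q)}(x)`. -/
noncomputable def jacobiM (n : ℕ) (p q x : ℂ) : ℂ :=
  (-1) ^ n * (Nat.factorial n) * ∑ k ∈ Finset.range (n + 1),
    gbinom (p - n - 1) k * gbinom (q + n) (n - k) * (-x) ^ k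

/-- Left-sided Marichev–Saigo–Maeda fractional integral operator. -/
noncomputable def msmLeft (δ δ' μ μ' ε : ℂ) (f : ℝ → ℂ) (x : ℝ) : ℂ :=
  (x : ℂ) ^ (-δ) / Complex.Gamma ε *
    ∫ t in Set.Ioo (0 : ℝ) x, ((x - t : ℝ) : ℂ) ^ (ε - 1) * (t : ℂ) ^ (-δ') *
      appellF3 δ δ' μ μ' ε ((1 - t / x : ℝ) : ℂ) ((1 - x / t : ℝ) : ℂ) * f t

/-- Right-sided Marichev–Saigo–Maeda fractional integral operator. -/
noncomputable def msmRight (δ δ' μ μ' ε : ℂ) (f : ℝ → ℂ) (x : ℝ) : ℂ :=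
  (x : ℂ) ^ (-δ') / Complex.Gamma ε *
    ∫ t in Set.Ioi x, ((t - x : ℝ) : ℂ) ^ (ε - 1) * (t : ℂ) ^ (-δ) *
      appellF3 δ δ' μ μ' ε ((1 - t / x : ℝ) : ℂ) ((1 - x / t : ℝ) : ℂ) * f t

/-- Left-sided Saigo fractional integral operator. -/
noncomputable def saigoLeft (δ μ ε : ℂ) (f : ℝ → ℂ) (x : ℝ) : ℂ :=
  (x : ℂ) ^ (-δ - μ) / Complex.Gamma δ *
    ∫ t in Set.Ioo (0 : ℝ) x, ((x - t : ℝ) : ℂ) ^ (δ - 1) *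
      genHyp [δ + μ, -ε] [δ] ((1 - t / x : ℝ) : ℂ) * f t

/-- Right-sided Saigo fractional integral operator. -/
noncomputable def saigoRight (δ μ ε : ℂ) (f : ℝ → ℂ) (x : ℝ) : ℂ :=
  (1 / Complex.Gamma δ) *
    ∫ t in Set.Ioi x, ((t - x : ℝ) : ℂ) ^ (δ - 1) * (t : ℂ) ^ (-δ - μ) *
      genHyp [δ + μ, -ε] [δ] ((1 - x / t : ℝ) : ℂ) * f t

/-- Left-sided Riemann–Liouville fractional integral operator. -/
noncomputable def rlLeft (δ : ℂ) (f : ℝ → ℂ) (x : ℝ) : ℂ :=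
  (1 / Complex.Gamma δ) * ∫ t in Set.Ioo (0 : ℝ) x, ((x - t : ℝ) : ℂ) ^ (δ - 1) * f t

/-- Right-sided Riemann–Liouville fractional integral operator. -/
noncomputable def rlRight (δ : ℂ) (f : ℝ → ℂ) (x : ℝ) : ℂ :=
  (1 / Complex.Gamma δ) * ∫ t in Set.Ioi x, ((t - x : ℝ) : ℂ) ^ (δ - 1) * f t

/-- Left-sided Erdélyi–Kober fractional integral operator `I⁺_{ε,δ}`. -/
noncomputable def ekLeft (ε δ : ℂ) (f : ℝ → ℂ) (x : ℝ) : ℂ :=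
  (x : ℂ) ^ (-δ - ε) / Complex.Gamma δ *
    ∫ t in Set.Ioo (0 : ℝ) x, ((x - t : ℝ) : ℂ) ^ (δ - 1) * (t : ℂ) ^ ε * f t

/-- Right-sided Erdélyi–Kober fractional integral operator `K⁻_{ε,δ}`. -/
noncomputable def ekRight (ε δ : ℂ) (f : ℝ → ℂ) (x : ℝ) : ℂ :=
  (x : ℂ) ^ ε / Complex.Gamma δ *
    ∫ t in Set.Ioi x, ((t - x : ℝ) : ℂ) ^ (δ - 1) * (t : ℂ) ^ (-δ - ε) * f t

/-- Left-sided Marichev–Saigo–Maeda fractional derivative operator. -/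
noncomputable def msmDLeft (δ δ' μ μ' ε : ℂ) (f : ℝ → ℂ) (x : ℝ) : ℂ :=
  iteratedDeriv (⌊ε.re⌋ + 1).toNat
    (msmLeft (-δ') (-δ) (-μ' + ((⌊ε.re⌋ + 1 : ℤ) : ℂ)) (-μ) (-ε + ((⌊ε.re⌋ + 1 : ℤ) : ℂ)) f) x

/-- Right-sided Marichev–Saigo–Maeda fractional derivative operator. -/
noncomputable def msmDRight (δ δ' μ μ' ε : ℂ) (f : ℝ → ℂ) (x : ℝ) : ℂ :=
  (-1 : ℂ) ^ (⌊ε.re⌋ + 1).toNat * iteratedDeriv (⌊ε.re⌋ + 1).toNat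
    (msmRight (-δ') (-δ) (-μ') (-μ + ((⌊ε.re⌋ + 1 : ℤ) : ℂ)) (-ε + ((⌊ε.re⌋ + 1 : ℤ) : ℂ)) f) x

/-!
Expanding `M_n^{(p,q)}(1/t)` in powers of `1/t`, the integrand becomes a finite combination of
`(t - x)^(δ-1) t^(τ-1-k)`, `0 ≤ k ≤ n`. The substitution `t = x / s` turns each of these into a
Beta integral, so the operator sends `t^(τ-1-k)` to `x^(δ+τ-1-k) Γ(1-δ-τ+k) / Γ(1-τ+k)`. Writing
these Gamma quotients and the two binomial coefficients as Pochhammer symbols matches the sum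
term by term with the `₃F₂` series, which terminates at `k = n` because of the parameter `-n`.
-/

open Complex Polynomial
open scoped Nat

lemma poch_eq_ascPochhammer_eval (a : ℂ) (k : ℕ) : poch a k = (ascPochhammer ℂ k).eval a := by
  induction k with
  | zero => simp [poch]
  | succ k ih => rw [poch, Finset.prod_range_succ, ← poch, ih, ascPochhammer_succ_eval]

lemma gbinom_eq_descPochhammer_eval (a : ℂ) (k : ℕ) :
    gbinom a k = (descPochhammer ℂ k).eval a / (k ! : ℂ) := by
  rw [gbinom, descPochhammer_eval_eq_prod_range]

lemma Gamma_add_nat_eq_poch_mul {z : ℂ} (hz : 0 < z.re) (k : ℕ) :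
    Gamma (z + k) = poch z k * Gamma z := by
  have hz' : ∀ m : ℕ, z ≠ -m := fun m h => by
    have := congrArg re h
    simp only [neg_re, natCast_re] at this
    linarith [(m.cast_nonneg : (0:ℝ) ≤ m)]
  rw [poch_eq_ascPochhammer_eval, ← Gamma_add_nat_div_Gamma_eq z hz',
    div_mul_cancel₀ _ (Gamma_ne_zero_of_re_pos hz)]

lemma poch_ne_zero_of_re_pos {z : ℂ} (hz : 0 < z.re) (k : ℕ) : poch z k ≠ 0 := by
  intro h
  have := Gamma_add_nat_eq_poch_mul hz k
  rw [h, zero_mul] at this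
  exact Gamma_ne_zero_of_re_pos (by simp; positivity) this

lemma poch_neg_natCast_of_lt {n k : ℕ} (h : n < k) : poch (-n) k = 0 := by
  rw [poch_eq_ascPochhammer_eval, ascPochhammer_eval_neg_coe_nat_of_lt h]

lemma poch_neg_natCast {n k : ℕ} (h : k ≤ n) :
    poch (-n) k = (-1) ^ k * n ! / (n - k)! := by
  rw [eq_div_iff (by simp [Nat.factorial_ne_zero]), poch_eq_ascPochhammer_eval,
    ascPochhammer_eval_neg_eq_descPochhammer, descPochhammer_eval_eq_descFactorial,
    ← Nat.factorial_mul_descFactorial h]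
  push_cast
  ring

lemma gbinom_eq_neg_one_pow_mul_poch_div (a : ℂ) (k : ℕ) :
    gbinom a k = (-1) ^ k * poch (-a) k / k ! := by
  rw [gbinom_eq_descPochhammer_eval, poch_eq_ascPochhammer_eval,
    ascPochhammer_eval_neg_eq_descPochhammer, ← mul_assoc, ← pow_add, ← two_mul, pow_mul]
  simp

lemma gbinom_add_nat_sub {a : ℂ} {n k : ℕ} (h : k ≤ n) (ha : poch (1 + a) k ≠ 0) :
    gbinom (a + n) (n - k) = poch (1 + a) n / ((n - k)! * poch (1 + a) k) := by
  have split := congrArg (eval (1 + a)) (ascPochhammer_mul ℂ k (n - k))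
  rw [Nat.add_sub_cancel' h, eval_mul, eval_comp] at split
  rw [gbinom_eq_descPochhammer_eval, descPochhammer_eval_eq_ascPochhammer,
    poch_eq_ascPochhammer_eval, poch_eq_ascPochhammer_eval, ← split, Nat.cast_sub h]
  simp only [eval_add, eval_X, eval_natCast]
  rw [poch_eq_ascPochhammer_eval] at ha
  rw [mul_comm (((n - k)! : ℕ) : ℂ), mul_div_mul_left _ _ ha,
    show a + n - (n - k) + 1 = 1 + a + k by ring]

open MeasureTheory Set

lemma ofReal_cpow_eq_exp {r : ℝ} (hr : 0 < r) (w : ℂ) : (r : ℂ) ^ w = exp (Real.log r * w) := by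
  rw [cpow_def_of_ne_zero (ofReal_ne_zero.mpr hr.ne'), ofReal_log hr.le]

-- All bases are positive reals, so each power is `exp (log r * w)` and the identity is additivity
-- of `Real.log`.
lemma abs_deriv_smul_sub_cpow_mul_cpow_comp_inv {x : ℝ} (hx : 0 < x) (a c : ℂ) {s : ℝ}
    (hs : s ∈ Ioo (0 : ℝ) 1) :
    |x * -(s ^ 2)⁻¹| • (((x * s⁻¹ - x : ℝ) : ℂ) ^ (a - 1) * ((x * s⁻¹ : ℝ) : ℂ) ^ c)
      = (x : ℂ) ^ (a + c) * ((s : ℂ) ^ (-a - c - 1) * ((1 - s : ℝ) : ℂ) ^ (a - 1)) := by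
  obtain ⟨hs0, hs1⟩ := hs
  have h1s : 0 < 1 - s := by linarith
  have hjac : |x * -(s ^ 2)⁻¹| = Real.exp (Real.log x - 2 * Real.log s) := by
    rw [Real.exp_sub, Real.exp_log hx, ← Real.log_rpow hs0, Real.exp_log (by positivity),
      abs_mul, abs_neg, abs_of_pos hx, abs_of_pos (by positivity)]
    norm_cast
  have hdiff : x * s⁻¹ - x = x * (1 - s) * s⁻¹ := by field_simp
  rw [hjac, hdiff, real_smul, ofReal_cpow_eq_exp (by positivity),
    ofReal_cpow_eq_exp (by positivity), ofReal_cpow_eq_exp hx, ofReal_cpow_eq_exp hs0,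
    ofReal_cpow_eq_exp h1s, ofReal_exp,
    ← exp_add, ← exp_add, ← exp_add, ← exp_add, Real.log_mul (by positivity) (by positivity),
    Real.log_mul (by positivity) (by positivity), Real.log_mul (by positivity) (by positivity),
    Real.log_inv]
  congr 1
  push_cast
  ring

section InvSubstitution

variable {x : ℝ}

lemma image_const_mul_inv_Ioo (hx : 0 < x) : (fun s : ℝ => x * s⁻¹) '' Ioo 0 1 = Ioi x := by
  ext t
  constructor
  · rintro ⟨s, ⟨hs0, hs1⟩, rfl⟩
    simpa using mul_lt_mul_of_pos_left ((one_lt_inv₀ hs0).mpr hs1) hx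
  · intro (ht : x < t)
    have ht0 : 0 < t := hx.trans ht
    exact ⟨x / t, ⟨div_pos hx ht0, (div_lt_one ht0).mpr ht⟩, by field_simp⟩

lemma hasDerivWithinAt_const_mul_inv (x : ℝ) {s : ℝ} (hs : s ≠ 0) (U : Set ℝ) :
    HasDerivWithinAt (fun s : ℝ => x * s⁻¹) (x * -(s ^ 2)⁻¹) U s :=
  ((hasDerivAt_inv hs).const_mul x).hasDerivWithinAt

lemma injOn_const_mul_inv (hx : x ≠ 0) (U : Set ℝ) : InjOn (fun s : ℝ => x * s⁻¹) U :=
  ((mul_right_injective₀ hx).comp inv_injective).injOn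

lemma integrableOn_Ioi_iff_comp_const_mul_inv (hx : 0 < x) (g : ℝ → ℂ) :
    IntegrableOn g (Ioi x) ↔
      IntegrableOn (fun s => |x * -(s ^ 2)⁻¹| • g (x * s⁻¹)) (Ioo 0 1) := by
  rw [← image_const_mul_inv_Ioo hx]
  exact integrableOn_image_iff_integrableOn_abs_deriv_smul measurableSet_Ioo
    (fun s hs => hasDerivWithinAt_const_mul_inv x hs.1.ne' _) (injOn_const_mul_inv hx.ne' _) g

lemma setIntegral_Ioi_eq_comp_const_mul_inv (hx : 0 < x) (g : ℝ → ℂ) :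
    ∫ t in Ioi x, g t = ∫ s in Ioo 0 1, |x * -(s ^ 2)⁻¹| • g (x * s⁻¹) := by
  rw [← image_const_mul_inv_Ioo hx]
  exact integral_image_eq_integral_abs_deriv_smul measurableSet_Ioo
    (fun s hs => hasDerivWithinAt_const_mul_inv x hs.1.ne' _) (injOn_const_mul_inv hx.ne' _) g

end InvSubstitution

section BetaIntegral

variable {u v : ℂ}

lemma integrableOn_Ioo_cpow_mul_one_sub_cpow (hu : 0 < u.re) (hv : 0 < v.re) :
    IntegrableOn (fun s : ℝ => (s : ℂ) ^ (u - 1) * ((1 - s : ℝ) : ℂ) ^ (v - 1)) (Ioo 0 1) := by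
  have h := betaIntegral_convergent hu hv
  rw [intervalIntegrable_iff_integrableOn_Ioc_of_le zero_le_one] at h
  refine (h.mono_set Ioo_subset_Ioc_self).congr_fun (fun s _ => ?_) measurableSet_Ioo
  norm_cast

lemma setIntegral_Ioo_cpow_mul_one_sub_cpow (hu : 0 < u.re) (hv : 0 < v.re) :
    ∫ s in Ioo (0 : ℝ) 1, (s : ℂ) ^ (u - 1) * ((1 - s : ℝ) : ℂ) ^ (v - 1)
      = Gamma u * Gamma v / Gamma (u + v) := by
  rw [eq_div_iff (Gamma_ne_zero_of_re_pos (by rw [add_re]; positivity)),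
    Gamma_mul_Gamma_eq_betaIntegral hu hv, betaIntegral,
    intervalIntegral.integral_of_le zero_le_one, integral_Ioc_eq_integral_Ioo, mul_comm]
  congr 1
  refine setIntegral_congr_fun measurableSet_Ioo fun s _ => ?_
  norm_cast

end BetaIntegral

section HalfLineBeta

variable {x : ℝ} {a c : ℂ}

lemma neg_sub_re_pos (hac : (a + c).re < 0) : 0 < (-a - c).re := by
  simp only [add_re] at hac
  simp only [sub_re, neg_re]
  linarith

lemma integrableOn_Ioi_sub_cpow_mul_cpow (hx : 0 < x) (ha : 0 < a.re) (hac : (a + c).re < 0) :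
    IntegrableOn (fun t : ℝ => ((t - x : ℝ) : ℂ) ^ (a - 1) * (t : ℂ) ^ c) (Ioi x) := by
  rw [integrableOn_Ioi_iff_comp_const_mul_inv hx]
  refine IntegrableOn.congr_fun ?_
    (fun s hs => (abs_deriv_smul_sub_cpow_mul_cpow_comp_inv hx a c hs).symm) measurableSet_Ioo
  exact (integrableOn_Ioo_cpow_mul_one_sub_cpow (neg_sub_re_pos hac) ha).const_mul _

lemma setIntegral_Ioi_sub_cpow_mul_cpow (hx : 0 < x) (ha : 0 < a.re) (hac : (a + c).re < 0) :
    ∫ t in Ioi x, ((t - x : ℝ) : ℂ) ^ (a - 1) * (t : ℂ) ^ c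
      = (x : ℂ) ^ (a + c) * (Gamma a * Gamma (-a - c) / Gamma (-c)) := by
  rw [setIntegral_Ioi_eq_comp_const_mul_inv hx,
    setIntegral_congr_fun measurableSet_Ioo fun s hs =>
      abs_deriv_smul_sub_cpow_mul_cpow_comp_inv hx a c hs,
    integral_const_mul, setIntegral_Ioo_cpow_mul_one_sub_cpow (neg_sub_re_pos hac) ha,
    show -a - c + a = -c by ring, mul_comm (Gamma _)]

end HalfLineBeta

lemma rlRight_congr {δ : ℂ} {f g : ℝ → ℂ} {x : ℝ} (h : EqOn f g (Ioi x)) :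
    rlRight δ f x = rlRight δ g x := by
  rw [rlRight, rlRight, setIntegral_congr_fun measurableSet_Ioi fun t ht => by rw [h ht]]

lemma rlRight_sum_mul_cpow {ι : Type*} {δ : ℂ} (hδ : 0 < δ.re) {x : ℝ} (hx : 0 < x)
    (s : Finset ι) (b c : ι → ℂ) (hc : ∀ i ∈ s, (δ + c i).re < 0) :
    rlRight δ (fun t => ∑ i ∈ s, b i * (t : ℂ) ^ c i) x
      = ∑ i ∈ s, b i * ((x : ℂ) ^ (δ + c i) * Gamma (-δ - c i) / Gamma (-c i)) := by
  simp_rw [rlRight, Finset.mul_sum, mul_left_comm _ (b _)]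
  rw [integral_finsetSum _ fun i hi =>
    (integrableOn_Ioi_sub_cpow_mul_cpow hx hδ (hc i hi)).const_mul (b i), Finset.mul_sum]
  refine Finset.sum_congr rfl fun i hi => ?_
  rw [integral_const_mul, setIntegral_Ioi_sub_cpow_mul_cpow hx hδ (hc i hi)]
  field_simp [Gamma_ne_zero_of_re_pos hδ]

lemma cpow_mul_jacobiM_inv (n : ℕ) (p q τ : ℂ) {t : ℂ} (ht : t ≠ 0) :
    t ^ (τ - 1) * jacobiM n p q (1 / t) = ∑ k ∈ Finset.range (n + 1),
      (-1) ^ n * n ! * gbinom (p - n - 1) k * gbinom (q + n) (n - k) * (-1) ^ k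
        * t ^ (τ - 1 - k) := by
  rw [jacobiM, Finset.mul_sum, Finset.mul_sum]
  refine Finset.sum_congr rfl fun k _ => ?_
  rw [cpow_sub _ (k : ℂ) ht, cpow_natCast, one_div, neg_pow t⁻¹, inv_pow]
  ring

lemma genHyp_eq_sum_range_of_neg_natCast_mem {as : List ℂ} {n : ℕ} (h : -(n : ℂ) ∈ as)
    (cs : List ℂ) (y : ℂ) :
    genHyp as cs y = ∑ k ∈ Finset.range (n + 1),
      (as.map (poch · k)).prod / (cs.map (poch · k)).prod * y ^ k / k ! := by
  refine tsum_eq_sum fun k hk => ?_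
  have hnk : n < k := by simpa using hk
  rw [List.prod_eq_zero (List.mem_map.mpr ⟨_, h, poch_neg_natCast_of_lt hnk⟩)]
  simp

/-- Corollary 5: Riemann–Liouville right-sided fractional integral of the Jacobi type
polynomial. -/
theorem rlRight_jacobiM (n : ℕ) (p q : ℝ) (hq : -1 < q) (δ τ : ℂ)
    (hδ : 0 < δ.re) (hδτ : δ.re < 1 - τ.re) (x : ℝ) (hx : 0 < x) :
    rlRight δ (fun t => (t : ℂ) ^ (τ - 1) * jacobiM n p q (1 / t)) x =
      (-1) ^ n * Complex.Gamma (1 + (q : ℂ) + n) * Complex.Gamma (1 - δ - τ) /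
        (Complex.Gamma (1 + (q : ℂ)) * Complex.Gamma (1 - τ)) *
        (x : ℂ) ^ (τ + δ - 1) *
        genHyp [1 + (n : ℂ) - p, -(n : ℂ), 1 - δ - τ]
          [1 + (q : ℂ), 1 - τ] (-(1 / (x : ℂ))) := by
  have hq' : 0 < (1 + (q : ℂ)).re := by simp; linarith
  have hτ : 0 < (1 - τ).re := by simp; linarith
  have hδτ' : 0 < (1 - δ - τ).re := by simp; linarith
  have hx0 : (x : ℂ) ≠ 0 := ofReal_ne_zero.mpr hx.ne'
  rw [rlRight_congr fun t (ht : x < t) => cpow_mul_jacobiM_inv n p q τ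
      (ofReal_ne_zero.mpr (hx.trans ht).ne'),
    rlRight_sum_mul_cpow hδ hx _ _ _ fun k _ => by simp; linarith [k.cast_nonneg (α := ℝ)],
    genHyp_eq_sum_range_of_neg_natCast_mem (n := n) (by simp), Finset.mul_sum]
  refine Finset.sum_congr rfl fun k hk => ?_
  have hkn : k ≤ n := Nat.lt_succ_iff.mp (Finset.mem_range.mp hk)
  rw [show -δ - (τ - 1 - k) = 1 - δ - τ + k by ring, show -(τ - 1 - k) = 1 - τ + k by ring,
    show δ + (τ - 1 - k) = τ + δ - 1 - k by ring, Gamma_add_nat_eq_poch_mul hδτ',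
    Gamma_add_nat_eq_poch_mul hτ, Gamma_add_nat_eq_poch_mul hq',
    cpow_sub _ (k : ℂ) hx0, cpow_natCast,
    gbinom_eq_neg_one_pow_mul_poch_div, gbinom_add_nat_sub hkn (poch_ne_zero_of_re_pos hq' k),
    neg_pow (1 / (x : ℂ)), one_div_pow, show -((p : ℂ) - n - 1) = 1 + n - p by ring]
  simp only [List.map_cons, List.map_nil, List.prod_cons, List.prod_nil]
  rw [poch_neg_natCast hkn]
  field_simp [poch_ne_zero_of_re_pos hτ k, poch_ne_zero_of_re_pos hq' k,
    Gamma_ne_zero_of_re_pos hq', Gamma_ne_zero_of_re_pos hτ, hx0]
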